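/- arXiv:2604.22581 — 8 statements merged into one kernel-verified Lean document; each statement's English description precedes it below -/
import Mathlib

section
/- If two nonexpansive operators agree in expectation at two fixed points of the expected operator, then the difference operator is almost surely constant on fixed points: for any two fixed points p, p' of T = E[T_ξ], it holds almost surely that T_ξ p − T_ξ p' = Tp − Tp'. -/
open MeasureTheory Filter Topology
open scoped RealInnerProductSpace ENNReal BigOperators

/-- If two nonexpansive operators agree in expectation at two fixed
points of the expected operator `T = E[T_ξ]`, then the difference operator is
almost surely constant on fixed points: `T_ξ p − T_ξ p' = Tp − Tp'` a.s. -/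
theorem stmt0_difference_constant_on_fixed_points
    {H : Type*} [NormedAddCommGroup H] [InnerProductSpace ℝ H] [CompleteSpace H]
    {Ω : Type*} [MeasurableSpace Ω] (μ : Measure Ω) [IsProbabilityMeasure μ]
    (Tξ : Ω → H → H) (T : H → H)
    (hne : ∀ᵐ ω ∂μ, ∀ x y : H, ‖Tξ ω x - Tξ ω y‖ ≤ ‖x - y‖)
    (hint : ∀ x : H, Integrable (fun ω => Tξ ω x) μ)
    (hT : ∀ x : H, T x = ∫ ω, Tξ ω x ∂μ)
    (p p' : H) (hp : T p = p) (hp' : T p' = p') :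
    ∀ᵐ ω ∂μ, Tξ ω p - Tξ ω p' = T p - T p' := by
  set d : H := p - p' with hd
  have hTd : T p - T p' = d := by rw [hp, hp']
  set f : Ω → H := fun ω => Tξ ω p - Tξ ω p' with hf
  have hfint : Integrable f μ := (hint p).sub (hint p')
  have hfi : ∫ ω, f ω ∂μ = d := by
    rw [hf]
    rw [integral_sub (hint p) (hint p'), ← hT p, ← hT p', hp, hp']
  -- the inner product function
  set g : Ω → ℝ := fun ω => ‖d‖ ^ 2 - ⟪f ω, d⟫ with hg
  have hinner : Integrable (fun ω => ⟪f ω, d⟫) μ := by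
    have := (innerSL ℝ d).integrable_comp hfint
    simpa [real_inner_comm] using this
  have hgint : Integrable g μ := (integrable_const _).sub hinner
  have hgnn : 0 ≤ᵐ[μ] g := by
    filter_upwards [hne] with ω hω
    have h1 : ‖f ω‖ ≤ ‖d‖ := hω p p'
    have h2 : ⟪f ω, d⟫ ≤ ‖f ω‖ * ‖d‖ := real_inner_le_norm _ _
    have h3 : ‖f ω‖ * ‖d‖ ≤ ‖d‖ * ‖d‖ :=
      mul_le_mul_of_nonneg_right h1 (norm_nonneg _)
    simp only [hg, Pi.zero_apply]
    nlinarith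
  have hgzero : ∫ ω, g ω ∂μ = 0 := by
    have : ∫ ω, ⟪f ω, d⟫ ∂μ = ⟪∫ ω, f ω ∂μ, d⟫ := by
      have := (innerSL ℝ d).integral_comp_comm hfint
      simpa [real_inner_comm] using this
    rw [hg]
    rw [integral_sub (integrable_const _) hinner, this, hfi,
      real_inner_self_eq_norm_sq]
    simp
  have hgae : g =ᵐ[μ] 0 :=
    ((integral_eq_zero_iff_of_nonneg_ae hgnn hgint).mp hgzero)
  filter_upwards [hne, hgae] with ω hω hgω
  have h1 : ‖f ω‖ ≤ ‖d‖ := hω p p'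
  have h2 : ⟪f ω, d⟫ = ‖d‖ ^ 2 := by
    have : ‖d‖ ^ 2 - ⟪f ω, d⟫ = 0 := hgω
    linarith
  have hnsq : ‖f ω - d‖ ^ 2 ≤ 0 := by
    have := norm_sub_sq_real (f ω) d
    have hfn : ‖f ω‖ ^ 2 ≤ ‖d‖ ^ 2 :=
      pow_le_pow_left₀ (norm_nonneg _) h1 2
    nlinarith
  have : f ω - d = 0 := by
    have := sq_nonneg ‖f ω - d‖
    have hn : ‖f ω - d‖ = 0 := by nlinarith
    exact norm_eq_zero.mp hn
  rw [hTd]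
  have : f ω = d := sub_eq_zero.mp this
  simpa [hf] using this
end

section
/- Bounded variance at one fixed point implies the same variance bound at every fixed point: if E[‖(T_ξ − T)p‖²] ≤ σ*² for some p ∈ Fix(T), then E[‖(T_ξ − T)p'‖²] ≤ σ*² for every p' ∈ Fix(T). -/
open MeasureTheory

/-!
For two fixed points `p, p'` of `T = 𝔼[T_ξ]`, the random vector `T_ξ p' - T_ξ p` has mean
`p' - p` and, by nonexpansiveness, norm at most `‖p' - p‖` almost surely. In a strictly convex
space, a random vector whose norm never exceeds the norm of its mean is almost surely constant,
so `T_ξ p' - p' = T_ξ p - p` almost surely and the two second moments coincide.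
-/

section StrictConvex

variable {Ω E : Type*} [MeasurableSpace Ω] {μ : Measure Ω} [IsProbabilityMeasure μ]
  [NormedAddCommGroup E] [NormedSpace ℝ E] [CompleteSpace E] [StrictConvexSpace ℝ E]

theorem ae_eq_integral_of_norm_le_norm_integral {f : Ω → E}
    (h : ∀ᵐ ω ∂μ, ‖f ω‖ ≤ ‖∫ x, f x ∂μ‖) : ∀ᵐ ω ∂μ, f ω = ∫ x, f x ∂μ := by
  rcases ae_eq_const_or_norm_integral_lt_of_norm_le_const h with h_const | h_lt
  · rwa [average_eq_integral] at h_const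
  · simp at h_lt

theorem ae_sub_eq_sub_of_isFixedPt_integral {Tξ : Ω → E → E}
    (hne : ∀ᵐ ω ∂μ, ∀ x y : E, ‖Tξ ω x - Tξ ω y‖ ≤ ‖x - y‖)
    (hint : ∀ x : E, Integrable (fun ω => Tξ ω x) μ) {p p' : E}
    (hp : Function.IsFixedPt (fun x => ∫ ω, Tξ ω x ∂μ) p)
    (hp' : Function.IsFixedPt (fun x => ∫ ω, Tξ ω x ∂μ) p') :
    ∀ᵐ ω ∂μ, Tξ ω p' - p' = Tξ ω p - p := by
  have h_mean : ∫ ω, (Tξ ω p' - Tξ ω p) ∂μ = p' - p := by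
    rw [integral_sub (hint p') (hint p), hp.eq, hp'.eq]
  have h_norm : ∀ᵐ ω ∂μ, ‖Tξ ω p' - Tξ ω p‖ ≤ ‖∫ ω, (Tξ ω p' - Tξ ω p) ∂μ‖ := by
    filter_upwards [hne] with ω hω
    rw [h_mean]
    exact hω p' p
  filter_upwards [ae_eq_integral_of_norm_le_norm_integral h_norm] with ω hω
  rw [h_mean] at hω
  rw [sub_eq_sub_iff_sub_eq_sub, hω]

end StrictConvex

theorem stmt1_bounded_variance_all_fixed_points_general
    {H : Type*} [NormedAddCommGroup H] [InnerProductSpace ℝ H] [CompleteSpace H]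
    {Ω : Type*} [MeasurableSpace Ω] (μ : Measure Ω) [IsProbabilityMeasure μ]
    (Tξ : Ω → H → H) (T : H → H) (σstar : ℝ)
    (hne : ∀ᵐ ω ∂μ, ∀ x y : H, ‖Tξ ω x - Tξ ω y‖ ≤ ‖x - y‖)
    (hint : ∀ x : H, Integrable (fun ω => Tξ ω x) μ)
    (hT : ∀ x : H, T x = ∫ ω, Tξ ω x ∂μ)
    (p : H) (hp : T p = p)
    (hvar : ∫⁻ ω, ‖Tξ ω p - T p‖₊ ^ 2 ∂μ ≤ ENNReal.ofReal (σstar ^ 2)) :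
    ∀ p' : H, T p' = p' →
      ∫⁻ ω, ‖Tξ ω p' - T p'‖₊ ^ 2 ∂μ ≤ ENNReal.ofReal (σstar ^ 2) := by
  intro p' hp'
  have h_ae := ae_sub_eq_sub_of_isFixedPt_integral hne hint ((hT p).symm.trans hp)
    ((hT p').symm.trans hp')
  calc ∫⁻ ω, ‖Tξ ω p' - T p'‖₊ ^ 2 ∂μ = ∫⁻ ω, ‖Tξ ω p - T p‖₊ ^ 2 ∂μ := by
        refine lintegral_congr_ae ?_
        filter_upwards [h_ae] with ω hω
        rw [hp, hp', hω]
    _ ≤ ENNReal.ofReal (σstar ^ 2) := hvar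

/-- Bounded variance at one fixed point implies the same variance
bound at every fixed point. -/
theorem stmt1_bounded_variance_all_fixed_points
    {H : Type*} [NormedAddCommGroup H] [InnerProductSpace ℝ H] [CompleteSpace H]
    {Ω : Type*} [MeasurableSpace Ω] (μ : Measure Ω) [IsProbabilityMeasure μ]
    (Tξ : Ω → H → H) (T : H → H) (σstar : ℝ)
    (hne : ∀ᵐ ω ∂μ, ∀ x y : H, ‖Tξ ω x - Tξ ω y‖ ≤ ‖x - y‖)
    (hmeas : ∀ x : H, AEStronglyMeasurable (fun ω => Tξ ω x) μ)
    (hint : ∀ x : H, Integrable (fun ω => Tξ ω x) μ)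
    (hT : ∀ x : H, T x = ∫ ω, Tξ ω x ∂μ)
    (p : H) (hp : T p = p)
    (hvar : ∫⁻ ω, ‖Tξ ω p - T p‖₊ ^ 2 ∂μ ≤ ENNReal.ofReal (σstar ^ 2)) :
    ∀ p' : H, T p' = p' →
      ∫⁻ ω, ‖Tξ ω p' - T p'‖₊ ^ 2 ∂μ ≤ ENNReal.ofReal (σstar ^ 2) :=
  stmt1_bounded_variance_all_fixed_points_general μ Tξ T σstar hne hint hT p hp hvar
end

section
/- One-step decrease inequality for stochastic Krasnoselskii–Mann: if x⁺ = (1−λ)x + λ T_ξ x with ξ drawn independently, then for every fixed point p of T, E[‖x⁺ − p‖²] ≤ (1 + 8λ²)‖x − p‖² − λ(1−λ)‖Tx − x‖² + 2λ²σ*². -/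
open MeasureTheory Filter Topology
open scoped RealInnerProductSpace ENNReal BigOperators

/-!
Write `x⁺ - p = v + λ e` with `v = (1 - λ)(x - p) + λ(Tx - p)` the deterministic
Krasnoselskii–Mann step and `e = T_ξ x - Tx` the noise. Since `e` has mean zero the cross
term integrates to zero, so `E‖x⁺ - p‖² = ‖v‖² + λ² E‖e‖²`. The identity
`‖(1 - λ)a + λb‖² = (1 - λ)‖a‖² + λ‖b‖² - λ(1 - λ)‖a - b‖²` together with `‖Tx - p‖ ≤ ‖x - p‖`
gives `‖v‖² ≤ ‖x - p‖² - λ(1 - λ)‖Tx - x‖²`, and the variance bound controls `E‖e‖²`.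
-/

section ConvexCombination

variable {H : Type*} [NormedAddCommGroup H] [InnerProductSpace ℝ H]

theorem norm_sub_smul_add_smul_sq (a b : H) (t : ℝ) :
    ‖(1 - t) • a + t • b‖ ^ 2 = (1 - t) * ‖a‖ ^ 2 + t * ‖b‖ ^ 2 - t * (1 - t) * ‖a - b‖ ^ 2 := by
  rw [norm_add_sq_real, norm_sub_sq_real, norm_smul, norm_smul, real_inner_smul_left,
    real_inner_smul_right, mul_pow, mul_pow, Real.norm_eq_abs, Real.norm_eq_abs, sq_abs, sq_abs]
  ring

theorem norm_sub_smul_add_smul_sq_le {a b : H} {t : ℝ} (ht : 0 ≤ t) (hba : ‖b‖ ≤ ‖a‖) :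
    ‖(1 - t) • a + t • b‖ ^ 2 ≤ ‖a‖ ^ 2 - t * (1 - t) * ‖a - b‖ ^ 2 := by
  have hsq : ‖b‖ ^ 2 ≤ ‖a‖ ^ 2 := pow_le_pow_left₀ (norm_nonneg b) hba 2
  rw [norm_sub_smul_add_smul_sq]
  nlinarith

end ConvexCombination

section MeanSquare

variable {Ω H : Type*} [MeasurableSpace Ω] {μ : Measure Ω} [NormedAddCommGroup H]

theorem memLp_two_of_lintegral_enorm_sq_lt_top {f : Ω → H} (hf : AEStronglyMeasurable f μ)
    (hfin : ∫⁻ ω, ‖f ω‖₊ ^ 2 ∂μ < ∞) : MemLp f 2 μ :=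
  (memLp_two_iff_integrable_sq_norm hf).mpr
    ⟨hf.norm.pow 2, by simpa [HasFiniteIntegral, ← enorm_eq_nnnorm, enorm_pow] using hfin⟩

theorem MeasureTheory.MemLp.lintegral_enorm_sq_eq_ofReal_integral {f : Ω → H}
    (hf : MemLp f 2 μ) :
    ∫⁻ ω, ‖f ω‖₊ ^ 2 ∂μ = ENNReal.ofReal (∫ ω, ‖f ω‖ ^ 2 ∂μ) := by
  rw [ofReal_integral_eq_lintegral_ofReal (hf.integrable_norm_pow two_ne_zero)
    (ae_of_all _ fun ω => sq_nonneg _)]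
  refine lintegral_congr fun ω => ?_
  rw [ENNReal.ofReal_pow (norm_nonneg _), ofReal_norm, enorm_eq_nnnorm]

theorem integral_norm_add_smul_sq_of_integral_eq_zero [InnerProductSpace ℝ H] [CompleteSpace H]
    [IsProbabilityMeasure μ] (v : H) (c : ℝ) {e : Ω → H} (he : MemLp e 2 μ)
    (hmean : ∫ ω, e ω ∂μ = 0) :
    ∫ ω, ‖v + c • e ω‖ ^ 2 ∂μ = ‖v‖ ^ 2 + c ^ 2 * ∫ ω, ‖e ω‖ ^ 2 ∂μ := by
  have he₁ : Integrable e μ := he.integrable one_le_two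
  have hcross : Integrable (fun ω => 2 * (c * ⟪v, e ω⟫)) μ :=
    ((he₁.const_inner v).const_mul c).const_mul 2
  simp_rw [norm_add_sq_real, real_inner_smul_right, norm_smul, mul_pow, Real.norm_eq_abs, sq_abs]
  rw [integral_add (f := fun ω => ‖v‖ ^ 2 + 2 * (c * ⟪v, e ω⟫)) ((integrable_const _).add hcross)
      ((he.integrable_norm_pow two_ne_zero).const_mul _),
    integral_add (integrable_const _) hcross, integral_const, probReal_univ, one_smul,
    integral_const_mul, integral_const_mul, integral_const_mul, integral_inner he₁, hmean,
    inner_zero_right, mul_zero, mul_zero, add_zero]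

end MeanSquare

theorem stmt4_one_step_decrease_general
    {H : Type*} [NormedAddCommGroup H] [InnerProductSpace ℝ H] [CompleteSpace H]
    {Ω : Type*} [MeasurableSpace Ω] (μ : Measure Ω) [IsProbabilityMeasure μ]
    (Tξ : Ω → H → H) (T : H → H) (σstar : ℝ) (lam : ℝ) (hlam : lam ∈ Set.Ioo (0:ℝ) 1)
    (x p : H) (hp : T p = p)
    (hTne : ∀ u v : H, ‖T u - T v‖ ≤ ‖u - v‖)
    (hint : Integrable (fun ω => Tξ ω x) μ)
    (hTx : T x = ∫ ω, Tξ ω x ∂μ)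
    (hvar : ∫⁻ ω, ‖Tξ ω x - T x‖₊ ^ 2 ∂μ
        ≤ ENNReal.ofReal (2 * σstar ^ 2 + 8 * ‖x - p‖ ^ 2)) :
    ∫⁻ ω, ‖((1 - lam) • x + lam • Tξ ω x) - p‖₊ ^ 2 ∂μ
      ≤ ENNReal.ofReal ((1 + 8 * lam ^ 2) * ‖x - p‖ ^ 2
          - lam * (1 - lam) * ‖T x - x‖ ^ 2 + 2 * lam ^ 2 * σstar ^ 2) := by
  set e : Ω → H := fun ω => Tξ ω x - T x
  set v : H := (1 - lam) • (x - p) + lam • (T x - p)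
  have he₁ : Integrable e μ := hint.sub (integrable_const _)
  have he : MemLp e 2 μ := memLp_two_of_lintegral_enorm_sq_lt_top he₁.aestronglyMeasurable
    (hvar.trans_lt ENNReal.ofReal_lt_top)
  have hmean : ∫ ω, e ω ∂μ = 0 := by
    rw [integral_sub hint (integrable_const _), ← hTx, integral_const, probReal_univ, one_smul,
      sub_self]
  have hnoise : ∫ ω, ‖e ω‖ ^ 2 ∂μ ≤ 2 * σstar ^ 2 + 8 * ‖x - p‖ ^ 2 :=
    (ENNReal.ofReal_le_ofReal_iff (by positivity)).mp
      (he.lintegral_enorm_sq_eq_ofReal_integral ▸ hvar)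
  have hbias : ‖v‖ ^ 2 ≤ ‖x - p‖ ^ 2 - lam * (1 - lam) * ‖T x - x‖ ^ 2 := by
    have := norm_sub_smul_add_smul_sq_le hlam.1.le (by simpa [hp] using hTne x p)
    rwa [sub_sub_sub_cancel_right, norm_sub_rev x (T x)] at this
  calc ∫⁻ ω, ‖((1 - lam) • x + lam • Tξ ω x) - p‖₊ ^ 2 ∂μ
      = ∫⁻ ω, ‖v + lam • e ω‖₊ ^ 2 ∂μ :=
        lintegral_congr fun ω => by congr 3; module
    _ = ENNReal.ofReal (‖v‖ ^ 2 + lam ^ 2 * ∫ ω, ‖e ω‖ ^ 2 ∂μ) := by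
        rw [MemLp.lintegral_enorm_sq_eq_ofReal_integral (f := fun ω => v + lam • e ω)
            ((memLp_const v).add (he.const_smul lam)),
          integral_norm_add_smul_sq_of_integral_eq_zero v lam he hmean]
    _ ≤ _ := ENNReal.ofReal_le_ofReal <| by
        linarith [mul_le_mul_of_nonneg_left hnoise (sq_nonneg lam)]

/-- One-step decrease inequality for stochastic Krasnoselskii–Mann:
if `x⁺ = (1−λ)x + λ T_ξ x`, then for every fixed point `p` of `T`,
`E[‖x⁺ − p‖²] ≤ (1 + 8λ²)‖x − p‖² − λ(1−λ)‖Tx − x‖² + 2λ²σ*²`. -/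
theorem stmt4_one_step_decrease
    {H : Type*} [NormedAddCommGroup H] [InnerProductSpace ℝ H] [CompleteSpace H]
    {Ω : Type*} [MeasurableSpace Ω] (μ : Measure Ω) [IsProbabilityMeasure μ]
    (Tξ : Ω → H → H) (T : H → H) (σstar : ℝ) (lam : ℝ) (hlam : lam ∈ Set.Ioo (0:ℝ) 1)
    (x p : H) (hp : T p = p)
    (hne : ∀ᵐ ω ∂μ, ∀ u v : H, ‖Tξ ω u - Tξ ω v‖ ≤ ‖u - v‖)
    (hTne : ∀ u v : H, ‖T u - T v‖ ≤ ‖u - v‖)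
    (hint : Integrable (fun ω => Tξ ω x) μ)
    (hTx : T x = ∫ ω, Tξ ω x ∂μ)
    (hvar : ∫⁻ ω, ‖Tξ ω x - T x‖₊ ^ 2 ∂μ
        ≤ ENNReal.ofReal (2 * σstar ^ 2 + 8 * ‖x - p‖ ^ 2)) :
    ∫⁻ ω, ‖((1 - lam) • x + lam • Tξ ω x) - p‖₊ ^ 2 ∂μ
      ≤ ENNReal.ofReal ((1 + 8 * lam ^ 2) * ‖x - p‖ ^ 2
          - lam * (1 - lam) * ‖T x - x‖ ^ 2 + 2 * lam ^ 2 * σstar ^ 2) :=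
  stmt4_one_step_decrease_general μ Tξ T σstar lam hlam x p hp hTne hint hTx hvar
end

section
/- Robbins–Siegmund almost-supermartingale theorem: let (X_k), (Y_k), (Z_k) be nonnegative random variables adapted to a filtration (F_k), and (η_k) a nonnegative real sequence with Σ η_k < ∞. If almost surely E[Y_{k+1} | F_k] ≤ (1 + η_k) Y_k − X_k + Z_k for all k and Σ Z_k < ∞ almost surely, then Σ X_k < ∞ almost surely and Y_k converges almost surely. -/
/-!
Dividing everything by `∏ j < k, (1 + η j)`, which increases to a finite limit, reduces the
theorem to the case `η = 0`. Then `U k = Y k + ∑ j < k, (X j - Z j)` is a supermartingale with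
`U (k + 1) ≥ -∑ j ≤ k, Z j`, a lower bound already known at time `k`. Stopping `U` at the first
time this bound drops below `-c` gives a supermartingale bounded below by `-c`, hence bounded in
L¹ and a.s. convergent; where `∑ Z < c` the stopping never happens, so `U` converges there. Since
`X, Y ≥ 0`, convergence of `U` and of `∑ Z` forces `∑ X < ∞` and convergence of `Y`.
-/

open MeasureTheory Filter Topology Finset

lemma summable_and_exists_tendsto_of_tendsto_add_sum_sub {a b c : ℕ → ℝ} {L : ℝ}
    (ha : ∀ k, 0 ≤ a k) (hb : ∀ k, 0 ≤ b k) (hc : Summable c)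
    (hu : Tendsto (fun k => a k + ∑ j ∈ range k, (b j - c j)) atTop (𝓝 L)) :
    Summable b ∧ ∃ l, Tendsto a atTop (𝓝 l) := by
  have hc_sum := hc.hasSum.tendsto_sum_nat
  obtain ⟨B, hB⟩ := hu.bddAbove_range
  obtain ⟨C, hC⟩ := hc_sum.bddAbove_range
  have hb_sum : Summable b := summable_of_sum_range_le hb (c := B + C) fun k => by
    have hu_k : a k + ∑ j ∈ range k, (b j - c j) ≤ B := hB ⟨k, rfl⟩
    have hc_k : ∑ j ∈ range k, c j ≤ C := hC ⟨k, rfl⟩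
    rw [sum_sub_distrib] at hu_k
    linarith [ha k]
  refine ⟨hb_sum, _, ((hu.sub hb_sum.hasSum.tendsto_sum_nat).add hc_sum).congr fun k => ?_⟩
  rw [sum_sub_distrib]
  ring

section ProdOneAdd

variable {η : ℕ → ℝ}

lemma one_le_prod_range_one_add (hη : ∀ k, 0 ≤ η k) (k : ℕ) : 1 ≤ ∏ j ∈ range k, (1 + η j) :=
  one_le_prod fun j _ => le_add_of_nonneg_right (hη j)

lemma monotone_prod_range_one_add (hη : ∀ k, 0 ≤ η k) :
    Monotone fun k => ∏ j ∈ range k, (1 + η j) :=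
  (prod_mono_set_of_one_le fun j => le_add_of_nonneg_right (hη j)).comp range_mono

lemma tendsto_prod_range_one_add (hηs : Summable η) :
    Tendsto (fun k => ∏ j ∈ range k, (1 + η j)) atTop (𝓝 (∏' j, (1 + η j))) :=
  (Real.multipliable_one_add_of_summable hηs).tendsto_prod_tprod_nat

lemma summable_of_summable_div_prod_range (hη : ∀ k, 0 ≤ η k) (hηs : Summable η)
    {x : ℕ → ℝ} (hx : ∀ k, 0 ≤ x k)
    (h : Summable fun k => x k / ∏ j ∈ range (k + 1), (1 + η j)) : Summable x := by
  refine (h.mul_left (∏' j, (1 + η j))).of_nonneg_of_le hx fun k => ?_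
  have hP := zero_lt_one.trans_le (one_le_prod_range_one_add hη (k + 1))
  calc x k = (∏ j ∈ range (k + 1), (1 + η j)) * (x k / ∏ j ∈ range (k + 1), (1 + η j)) :=
        (mul_div_cancel₀ _ hP.ne').symm
    _ ≤ (∏' j, (1 + η j)) * (x k / ∏ j ∈ range (k + 1), (1 + η j)) :=
        mul_le_mul_of_nonneg_right ((monotone_prod_range_one_add hη).ge_of_tendsto
          (tendsto_prod_range_one_add hηs) _) (div_nonneg (hx k) hP.le)

lemma tendsto_of_tendsto_div_prod_range (hη : ∀ k, 0 ≤ η k) (hηs : Summable η)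
    {y : ℕ → ℝ} {l : ℝ} (h : Tendsto (fun k => y k / ∏ j ∈ range k, (1 + η j)) atTop (𝓝 l)) :
    Tendsto y atTop (𝓝 ((∏' j, (1 + η j)) * l)) :=
  ((tendsto_prod_range_one_add hηs).mul h).congr fun k =>
    mul_div_cancel₀ _ (zero_lt_one.trans_le (one_le_prod_range_one_add hη k)).ne'

end ProdOneAdd

namespace MeasureTheory

variable {Ω : Type*} {m0 : MeasurableSpace Ω} {μ : Measure Ω} {ℱ : Filtration ℕ m0}
  {f g : ℕ → Ω → ℝ}

lemma stoppedProcess_hittingAfter_Ioi_le {c : ℝ} (hc : 0 ≤ c) (hf0 : f 0 = 0)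
    (hfg : ∀ n ω, f (n + 1) ω ≤ g n ω) (n : ℕ) (ω : Ω) :
    stoppedProcess f (hittingAfter g (Set.Ioi c) 0) n ω ≤ c := by
  set τ := hittingAfter g (Set.Ioi c) 0
  have hbefore (m : ℕ) (hm : (m : WithTop ℕ) ≤ τ ω) : f m ω ≤ c := by
    cases m with
    | zero => simp [hf0, hc]
    | succ k =>
      have hk : (k : WithTop ℕ) < τ ω := (WithTop.coe_lt_coe.2 k.lt_succ_self).trans_le hm
      exact (hfg k ω).trans (not_lt.1 (notMem_of_lt_hittingAfter hk k.zero_le))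
  rcases le_total (n : WithTop ℕ) (τ ω) with hn | hτn
  · rw [stoppedProcess_eq_of_le (i := n) hn]
    exact hbefore n hn
  · obtain ⟨m, hm⟩ := WithTop.ne_top_iff_exists.1 (ne_top_of_le_ne_top WithTop.coe_ne_top hτn)
    rw [stoppedProcess_eq_of_ge (i := n) hτn, ← hm]
    exact hbefore m hm.le

theorem Submartingale.exists_tendsto_of_le_of_bddAbove [IsFiniteMeasure μ]
    (hf : Submartingale f ℱ μ) (hf0 : f 0 = 0) (hg : Adapted ℱ g)
    (hfg : ∀ n ω, f (n + 1) ω ≤ g n ω) :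
    ∀ᵐ ω ∂μ, BddAbove (Set.range fun n => g n ω) →
      ∃ c, Tendsto (fun n => f n ω) atTop (𝓝 c) := by
  have hstopped (i : ℕ) : ∀ᵐ ω ∂μ, ∃ c,
      Tendsto (fun n => stoppedProcess f (hittingAfter g (Set.Ioi (i : ℝ)) 0) n ω) atTop (𝓝 c) := by
    have hsub := hf.stoppedProcess
      (hg.isStoppingTime_hittingAfter (n := 0) (measurableSet_Ioi (a := (i : ℝ))))
    refine hsub.exists_ae_tendsto_of_bdd (R := (2 * μ Set.univ * ENNReal.ofReal i).toNNReal)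
      fun n => ?_
    rw [ENNReal.coe_toNNReal (by finiteness)]
    refine eLpNorm_one_le_of_le' (hsub.integrable n) ?_
      (ae_of_all _ (stoppedProcess_hittingAfter_Ioi_le i.cast_nonneg hf0 hfg n))
    simpa [stoppedProcess, hf0] using hsub.setIntegral_le n.zero_le MeasurableSet.univ
  filter_upwards [ae_all_iff.2 hstopped] with ω hω ⟨b, hb⟩
  obtain ⟨i, hi⟩ := exists_nat_ge b
  have hτ : hittingAfter g (Set.Ioi (i : ℝ)) 0 ω = ⊤ :=
    hittingAfter_eq_top_iff.2 fun j _ => not_lt.2 ((hb ⟨j, rfl⟩).trans hi)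
  obtain ⟨c, hc⟩ := hω i
  exact ⟨c, hc.congr fun n => stoppedProcess_eq_of_le (hτ ▸ le_top)⟩

lemma Adapted.measurable_sum_range {u : ℕ → Ω → ℝ} (hu : Adapted ℱ u) {n k : ℕ}
    (hnk : n ≤ k + 1) : Measurable[ℱ k] fun ω => ∑ j ∈ range n, u j ω :=
  Finset.measurable_sum _ fun j hj => hu.measurable_le (by rw [mem_range] at hj; omega)

variable {X Y Z : ℕ → Ω → ℝ} {η : ℕ → ℝ}

theorem supermartingale_add_sum_sub [IsFiniteMeasure μ]
    (hX : Adapted ℱ X) (hY : Adapted ℱ Y) (hZ : Adapted ℱ Z)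
    (hXint : ∀ k, Integrable (X k) μ) (hYint : ∀ k, Integrable (Y k) μ)
    (hZint : ∀ k, Integrable (Z k) μ)
    (hrec : ∀ k, ∀ᵐ ω ∂μ, μ[Y (k + 1) | ℱ k] ω ≤ Y k ω - X k ω + Z k ω) :
    Supermartingale (fun k ω => Y k ω + ∑ j ∈ range k, (X j ω - Z j ω)) ℱ μ := by
  set S : ℕ → Ω → ℝ := fun n ω => ∑ j ∈ range n, (X j ω - Z j ω)
  have hS (k : ℕ) : Measurable[ℱ k] (S (k + 1)) := (hX.sub hZ).measurable_sum_range le_rfl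
  have hSint (n : ℕ) : Integrable (S n) μ :=
    integrable_finsetSum _ fun j _ => (hXint j).sub (hZint j)
  refine supermartingale_nat (Adapted.stronglyAdapted fun k => (hY k).add
    ((hX.sub hZ).measurable_sum_range k.le_succ)) (fun k => (hYint k).add (hSint k)) fun k => ?_
  have hcond : μ[Y (k + 1) + S (k + 1) | ℱ k] =ᵐ[μ] μ[Y (k + 1) | ℱ k] + S (k + 1) :=
    (condExp_add (hYint _) (hSint _) _).trans (EventuallyEq.add EventuallyEq.rfl
      (condExp_of_stronglyMeasurable (ℱ.le k) (hS k).stronglyMeasurable (hSint _)).eventuallyEq)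
  filter_upwards [hcond, hrec k] with ω hω hrecω
  change μ[Y (k + 1) + S (k + 1) | ℱ k] ω ≤ Y k ω + S k ω
  rw [hω, Pi.add_apply]
  simp only [S, sum_range_succ]
  linarith

theorem ae_summable_and_exists_tendsto_of_condExp_le_sub_add [IsFiniteMeasure μ]
    (hXnn : ∀ k, 0 ≤ X k) (hYnn : ∀ k, 0 ≤ Y k) (hZnn : ∀ k, 0 ≤ Z k)
    (hX : Adapted ℱ X) (hY : Adapted ℱ Y) (hZ : Adapted ℱ Z)
    (hXint : ∀ k, Integrable (X k) μ) (hYint : ∀ k, Integrable (Y k) μ)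
    (hZint : ∀ k, Integrable (Z k) μ)
    (hrec : ∀ k, ∀ᵐ ω ∂μ, μ[Y (k + 1) | ℱ k] ω ≤ Y k ω - X k ω + Z k ω)
    (hZsum : ∀ᵐ ω ∂μ, Summable fun k => Z k ω) :
    ∀ᵐ ω ∂μ, Summable (fun k => X k ω) ∧ ∃ l, Tendsto (fun k => Y k ω) atTop (𝓝 l) := by
  set U : ℕ → Ω → ℝ := fun k ω => Y k ω + ∑ j ∈ range k, (X j ω - Z j ω)
  have hU : Supermartingale U ℱ μ :=
    supermartingale_add_sum_sub hX hY hZ hXint hYint hZint hrec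
  have hF : Submartingale (-(U - fun _ => U 0)) ℱ μ :=
    (hU.sub_martingale (martingale_const_fun _ _ (hU.stronglyAdapted 0) (hU.integrable 0))).neg
  have hF_le (n : ℕ) (ω : Ω) :
      (-(U - fun _ => U 0) : ℕ → Ω → ℝ) (n + 1) ω ≤ Y 0 ω + ∑ j ∈ range (n + 1), Z j ω := by
    have hXsum : 0 ≤ ∑ j ∈ range (n + 1), X j ω := sum_nonneg fun j _ => hXnn j ω
    have hY_nn : 0 ≤ Y (n + 1) ω := hYnn (n + 1) ω
    simp only [U, Pi.neg_apply, Pi.sub_apply, sum_sub_distrib, range_zero, sum_empty]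
    linarith
  have hconv := hF.exists_tendsto_of_le_of_bddAbove (by simp [U])
    (g := fun n ω => Y 0 ω + ∑ j ∈ range (n + 1), Z j ω)
    (fun n => (hY.measurable_le n.zero_le).add (hZ.measurable_sum_range le_rfl)) hF_le
  filter_upwards [hconv, hZsum] with ω hω hZω
  obtain ⟨c, hc⟩ := hω ⟨Y 0 ω + ∑' j, Z j ω, by
    rintro _ ⟨n, rfl⟩
    exact add_le_add_right (hZω.sum_le_tsum _ fun j _ => hZnn j ω) _⟩
  refine summable_and_exists_tendsto_of_tendsto_add_sum_sub (hYnn · ω) (hXnn · ω) hZω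
    ((hc.neg.add_const (U 0 ω)).congr fun k => ?_)
  simp [U]

lemma condExp_div_prod_range_le (hη : ∀ k, 0 ≤ η k) {k : ℕ}
    (hrec : ∀ᵐ ω ∂μ, μ[Y (k + 1) | ℱ k] ω ≤ (1 + η k) * Y k ω - X k ω + Z k ω) :
    ∀ᵐ ω ∂μ, μ[fun ω => Y (k + 1) ω / ∏ j ∈ range (k + 1), (1 + η j) | ℱ k] ω ≤
      Y k ω / ∏ j ∈ range k, (1 + η j) - X k ω / ∏ j ∈ range (k + 1), (1 + η j)
        + Z k ω / ∏ j ∈ range (k + 1), (1 + η j) := by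
  set P := ∏ j ∈ range k, (1 + η j)
  have hP : 0 < P := zero_lt_one.trans_le (one_le_prod_range_one_add hη k)
  have hηk : 0 < 1 + η k := by linarith [hη k]
  have hsmul : (fun ω => Y (k + 1) ω / ∏ j ∈ range (k + 1), (1 + η j))
      = (P * (1 + η k))⁻¹ • Y (k + 1) := by
    ext ω
    rw [prod_range_succ, Pi.smul_apply, smul_eq_mul, div_eq_inv_mul]
  filter_upwards [condExp_smul (μ := μ) (P * (1 + η k))⁻¹ (Y (k + 1)) (ℱ k), hrec]
    with ω hω hrecω
  rw [hsmul, hω, Pi.smul_apply, smul_eq_mul, prod_range_succ]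
  calc (P * (1 + η k))⁻¹ * μ[Y (k + 1) | ℱ k] ω
      ≤ (P * (1 + η k))⁻¹ * ((1 + η k) * Y k ω - X k ω + Z k ω) :=
        mul_le_mul_of_nonneg_left hrecω (by positivity)
    _ = Y k ω / P - X k ω / (P * (1 + η k)) + Z k ω / (P * (1 + η k)) := by
        field_simp

end MeasureTheory

open MeasureTheory

/-- Robbins–Siegmund almost-supermartingale theorem. -/
theorem stmt6_robbins_siegmund
    {Ω : Type*} {m0 : MeasurableSpace Ω} (μ : Measure Ω) [IsProbabilityMeasure μ]
    (ℱ : MeasureTheory.Filtration ℕ m0)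
    (X Y Z : ℕ → Ω → ℝ) (η : ℕ → ℝ)
    (hXnn : ∀ k, 0 ≤ X k) (hYnn : ∀ k, 0 ≤ Y k) (hZnn : ∀ k, 0 ≤ Z k)
    (hXadp : MeasureTheory.Adapted ℱ X) (hYadp : MeasureTheory.Adapted ℱ Y)
    (hZadp : MeasureTheory.Adapted ℱ Z)
    (hXint : ∀ k, Integrable (X k) μ) (hYint : ∀ k, Integrable (Y k) μ)
    (hZint : ∀ k, Integrable (Z k) μ)
    (hηnn : ∀ k, 0 ≤ η k) (hηsum : Summable η)
    (hrec : ∀ k, ∀ᵐ ω ∂μ,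
      (μ[Y (k + 1) | ℱ k]) ω ≤ (1 + η k) * Y k ω - X k ω + Z k ω)
    (hZsum : ∀ᵐ ω ∂μ, Summable (fun k => Z k ω)) :
    ∀ᵐ ω ∂μ, Summable (fun k => X k ω) ∧
      ∃ l : ℝ, Tendsto (fun k => Y k ω) atTop (nhds l) := by
  set P : ℕ → ℝ := fun k => ∏ j ∈ range k, (1 + η j)
  have hP (k : ℕ) : 0 < P k := zero_lt_one.trans_le (one_le_prod_range_one_add hηnn k)
  have hZsum_rescaled : ∀ᵐ ω ∂μ, Summable fun k => Z k ω / P (k + 1) := by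
    filter_upwards [hZsum] with ω hω
    exact hω.of_nonneg_of_le (fun k => div_nonneg (hZnn k ω) (hP _).le)
      fun k => div_le_self (hZnn k ω) (one_le_prod_range_one_add hηnn _)
  have hrescaled := ae_summable_and_exists_tendsto_of_condExp_le_sub_add (μ := μ) (ℱ := ℱ)
    (X := fun k ω => X k ω / P (k + 1)) (Y := fun k ω => Y k ω / P k)
    (Z := fun k ω => Z k ω / P (k + 1))
    (fun k ω => div_nonneg (hXnn k ω) (hP _).le) (fun k ω => div_nonneg (hYnn k ω) (hP _).le)
    (fun k ω => div_nonneg (hZnn k ω) (hP _).le)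
    (fun k => (hXadp k).div_const _) (fun k => (hYadp k).div_const _)
    (fun k => (hZadp k).div_const _)
    (fun k => (hXint k).div_const _) (fun k => (hYint k).div_const _)
    (fun k => (hZint k).div_const _) (fun k => condExp_div_prod_range_le hηnn (hrec k))
    hZsum_rescaled
  filter_upwards [hrescaled] with ω ⟨hX, l, hY⟩
  exact ⟨summable_of_summable_div_prod_range hηnn hηsum (hXnn · ω) hX,
    _, tendsto_of_tendsto_div_prod_range hηnn hηsum hY⟩
end

section
/- Small-o rate for the running minimum: if (x_k) and (η_k) are nonnegative real sequences with Σ η_k x_k < ∞ and Σ η_k = ∞, then (Σ_{k=0}^{K-1} η_k) · min_{0 ≤ k ≤ K−1} x_k → 0 as K → ∞. -/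
open Filter Topology
open scoped BigOperators

/-- Small-o rate for the running minimum: if `(x_k)`, `(η_k)` are
nonnegative with `Σ η_k x_k < ∞` and `Σ η_k = ∞`, then
`(Σ_{k<K} η_k) · min_{k<K} x_k → 0`. -/
theorem stmt7_small_o_running_min
    (x η : ℕ → ℝ) (hx : ∀ k, 0 ≤ x k) (hη : ∀ k, 0 ≤ η k)
    (hsum : Summable (fun k => η k * x k))
    (hdiv : Tendsto (fun K => ∑ k ∈ Finset.range K, η k) atTop atTop) :
    Tendsto (fun K => (∑ k ∈ Finset.range (K + 1), η k) *
        (Finset.range (K + 1)).inf' (by simp) x) atTop (nhds 0) := by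
  rw [Metric.tendsto_atTop]
  intro ε hε
  have h4 : (0:ℝ) < ε/4 := by linarith
  -- choose N so that the tail tsum is < ε/4
  have htail := tendsto_sum_nat_add (fun k => η k * x k)
  obtain ⟨N, hN⟩ := (Metric.tendsto_atTop.mp htail (ε/4) h4)
  have hpos : 0 ≤ ∑' i, η (i + N) * x (i + N) :=
    tsum_nonneg fun i => mul_nonneg (hη _) (hx _)
  have hNtail : ∑' i, η (i + N) * x (i + N) < ε/4 := by
    have := hN N le_rfl
    rwa [Real.dist_eq, sub_zero, abs_of_nonneg hpos] at this
  set SN := ∑ k ∈ Finset.range N, η k with hSN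
  -- choose M so that partial sums are ≥ 2 * SN from M on
  obtain ⟨M, hM⟩ := eventually_atTop.mp (hdiv.eventually_ge_atTop (2 * SN))
  refine ⟨max M N, fun K hK => ?_⟩
  have hKM : M ≤ K := le_trans (le_max_left _ _) hK
  have hKN : N ≤ K := le_trans (le_max_right _ _) hK
  set S := ∑ k ∈ Finset.range (K + 1), η k with hS
  have hS2 : 2 * SN ≤ S := hM (K + 1) (le_trans hKM (Nat.le_succ K))
  set m := (Finset.range (K + 1)).inf' (by simp) x with hm
  have hm0 : 0 ≤ m := by rw [hm]; apply Finset.le_inf'; intro i _; exact hx i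
  set IcoS := ∑ k ∈ Finset.Ico N (K + 1), η k with hIcoS
  have hsplit : SN + IcoS = S :=
    Finset.sum_range_add_sum_Ico η (le_trans hKN (Nat.le_succ K))
  -- m is below every x k for k in the Ico range
  have step1 : IcoS * m ≤ ∑ k ∈ Finset.Ico N (K + 1), η k * x k := by
    rw [hIcoS, Finset.sum_mul]
    refine Finset.sum_le_sum fun k hk => ?_
    have hk' : k ∈ Finset.range (K + 1) := by
      rw [Finset.mem_Ico] at hk
      exact Finset.mem_range.mpr hk.2
    exact mul_le_mul_of_nonneg_left (Finset.inf'_le x hk') (hη k)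
  have hshift : Summable fun i => η (i + N) * x (i + N) :=
    (summable_nat_add_iff N).2 hsum
  have step2 : ∑ k ∈ Finset.Ico N (K + 1), η k * x k ≤ ∑' i, η (i + N) * x (i + N) := by
    rw [Finset.sum_Ico_eq_sum_range]
    have : ∀ i ∈ Finset.range (K + 1 - N), η (N + i) * x (N + i) = η (i + N) * x (i + N) := by
      intro i _; rw [add_comm]
    rw [Finset.sum_congr rfl this]
    exact Summable.sum_le_tsum _ (fun i _ => mul_nonneg (hη _) (hx _)) hshift
  have hIm : IcoS * m < ε/4 := lt_of_le_of_lt (le_trans step1 step2) hNtail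
  have hSNle : SN ≤ IcoS := by linarith
  have hSNm : SN * m ≤ IcoS * m := mul_le_mul_of_nonneg_right hSNle hm0
  have hSm : S * m = SN * m + IcoS * m := by rw [← hsplit]; ring
  have hfin : S * m < ε := by linarith
  have hSnn : 0 ≤ S := by
    refine Finset.sum_nonneg fun k _ => hη k
  rw [Real.dist_eq, sub_zero, abs_of_nonneg (mul_nonneg hSnn hm0)]
  exact hfin
end

section
/- Residual-vanishing lemma: let (r_k), (η_k) be nonnegative real sequences with Σ η_k r_k² < ∞ and Σ η_k = ∞, and let (w_k) be a sequence in a Hilbert space such that the partial sums of Σ η_k w_k converge. If there exists L ≥ 0 such that |r_{K+τ} − r_K| ≤ L(Σ_{k=K}^{K+τ−1} η_k r_k + ‖Σ_{k=K}^{K+τ−1} η_k w_k‖) for all K, τ ≥ 0, then r_k → 0. -/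
open Filter Topology
open scoped BigOperators

/-- Residual-vanishing lemma: if `Σ η_k r_k² < ∞`, `Σ η_k = ∞`,
the series `Σ η_k w_k` converges in a Hilbert space, and the residuals satisfy
the perturbed regularity inequality, then `r_k → 0`. -/
theorem stmt8_residual_vanishing
    {H : Type*} [NormedAddCommGroup H] [InnerProductSpace ℝ H] [CompleteSpace H]
    (r η : ℕ → ℝ) (w : ℕ → H) (L : ℝ) (hL : 0 ≤ L)
    (hr : ∀ k, 0 ≤ r k) (hη : ∀ k, 0 ≤ η k)
    (hsum : Summable (fun k => η k * r k ^ 2))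
    (hdiv : Tendsto (fun K => ∑ k ∈ Finset.range K, η k) atTop atTop)
    (hw : ∃ S : H, Tendsto (fun K => ∑ k ∈ Finset.range K, η k • w k) atTop (nhds S))
    (hreg : ∀ K τ : ℕ, |r (K + τ) - r K| ≤
      L * ((∑ k ∈ Finset.Ico K (K + τ), η k * r k) +
        ‖∑ k ∈ Finset.Ico K (K + τ), η k • w k‖)) :
    Tendsto r atTop (nhds 0) := by
  classical
  set L' : ℝ := L + 1 with hL'def
  have hL' : (0:ℝ) < L' := by positivity
  have hreg' : ∀ K τ : ℕ, |r (K + τ) - r K| ≤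
      L' * ((∑ k ∈ Finset.Ico K (K + τ), η k * r k) +
        ‖∑ k ∈ Finset.Ico K (K + τ), η k • w k‖) := by
    intro K τ
    refine (hreg K τ).trans ?_
    have h1 : 0 ≤ (∑ k ∈ Finset.Ico K (K + τ), η k * r k) +
        ‖∑ k ∈ Finset.Ico K (K + τ), η k • w k‖ :=
      add_nonneg (Finset.sum_nonneg fun k _ => mul_nonneg (hη k) (hr k)) (norm_nonneg _)
    nlinarith
  -- liminf r = 0 : for every ε > 0 and N there is m > N with r m < ε
  have hinf : ∀ ε : ℝ, 0 < ε → ∀ N : ℕ, ∃ m, N < m ∧ r m < ε := by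
    intro ε hε N
    by_contra hcon
    push_neg at hcon
    have hsub : Summable (fun k => ε ^ 2 * η (k + (N + 1))) := by
      refine Summable.of_nonneg_of_le (fun k => mul_nonneg (by positivity) (hη _)) (fun k => ?_)
        ((summable_nat_add_iff (N+1)).2 hsum)
      have hk : ε ≤ r (k + (N+1)) := hcon _ (by omega)
      have h1 := hη (k + (N+1)); have h2 := hr (k + (N+1))
      nlinarith [mul_le_mul_of_nonneg_left (mul_le_mul hk hk hε.le h2) h1]
    have h1 : Summable (fun k => ε ^ 2 * η k) := (summable_nat_add_iff (N+1)).1 hsub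
    have hηsum : Summable η := by
      have := (summable_mul_left_iff (a := ε ^ 2) (by positivity)).1 h1
      exact this
    exact not_tendsto_atTop_of_tendsto_nhds hηsum.hasSum.tendsto_sum_nat hdiv
  rw [Metric.tendsto_atTop]
  intro ε0 hε0
  set ε : ℝ := ε0 / 4 with hεdef
  have hε : 0 < ε := by positivity
  have c1 : CauchySeq (fun n => ∑ k ∈ Finset.range n, η k * r k ^ 2) :=
    hsum.hasSum.tendsto_sum_nat.cauchySeq
  obtain ⟨N1, hN1⟩ := Metric.cauchySeq_iff.1 c1 (ε^2/(4*L')) (by positivity)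
  obtain ⟨S, hS⟩ := hw
  have c2 : CauchySeq (fun n => ∑ k ∈ Finset.range n, η k • w k) := hS.cauchySeq
  obtain ⟨N2, hN2⟩ := Metric.cauchySeq_iff.1 c2 (ε/(4*L')) (by positivity)
  refine ⟨max N1 N2 + 1, fun j hj => ?_⟩
  have hjN1 : N1 ≤ j := by omega
  have hjN2 : N2 ≤ j := by omega
  have hrj : r j < 2 * ε := by
    by_contra hcon
    push_neg at hcon
    have hex : ∃ m, j < m ∧ r m < ε := hinf ε hε j
    set b := Nat.find hex with hbdef
    obtain ⟨hjb, hrb⟩ : j < b ∧ r b < ε := Nat.find_spec hex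
    have hmin : ∀ k, k < b → ¬(j < k ∧ r k < ε) := fun k hk => Nat.find_min hex hk
    have hrk : ∀ k ∈ Finset.Ico j b, ε ≤ r k := by
      intro k hk
      rw [Finset.mem_Ico] at hk
      rcases eq_or_lt_of_le hk.1 with h | h
      · rw [← h]; linarith
      · have := hmin k hk.2
        push_neg at this
        exact this h
    set Sr : ℝ := ∑ k ∈ Finset.Ico j b, η k * r k with hSrdef
    set T : ℝ := ∑ k ∈ Finset.Ico j b, η k * r k ^ 2 with hTdef
    set Bw : ℝ := ‖∑ k ∈ Finset.Ico j b, η k • w k‖ with hBwdef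
    have hSr0 : 0 ≤ Sr := Finset.sum_nonneg fun k _ => mul_nonneg (hη k) (hr k)
    have h1 : ε * Sr ≤ T := by
      rw [hSrdef, hTdef, Finset.mul_sum]
      refine Finset.sum_le_sum fun k hk => ?_
      have h2 := hrk k hk
      have h3 := hη k
      have h4 := hr k
      nlinarith [mul_le_mul_of_nonneg_left h2 (mul_nonneg h3 h4)]
    -- Cauchy bounds
    have hT : T < ε^2/(4*L') := by
      have := hN1 b (le_trans hjN1 hjb.le) j hjN1
      rw [Real.dist_eq] at this
      have heq : T = (∑ k ∈ Finset.range b, η k * r k ^ 2)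
          - ∑ k ∈ Finset.range j, η k * r k ^ 2 :=
        (Finset.sum_Ico_eq_sub _ hjb.le)
      calc T ≤ |(∑ k ∈ Finset.range b, η k * r k ^ 2)
          - ∑ k ∈ Finset.range j, η k * r k ^ 2| := by rw [heq]; exact le_abs_self _
        _ < ε^2/(4*L') := this
    have hBw : Bw < ε/(4*L') := by
      have := hN2 b (le_trans hjN2 hjb.le) j hjN2
      rw [dist_eq_norm] at this
      have heq : (∑ k ∈ Finset.Ico j b, η k • w k) = (∑ k ∈ Finset.range b, η k • w k)
          - ∑ k ∈ Finset.range j, η k • w k := (Finset.sum_Ico_eq_sub _ hjb.le)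
      rw [hBwdef, heq]
      exact this
    have hR := hreg' j (b - j)
    rw [Nat.add_sub_cancel' hjb.le] at hR
    have habs : r j - r b ≤ |r b - r j| := by
      rw [abs_sub_comm]; exact le_abs_self _
    have hmain : ε < L' * (Sr + Bw) := by
      calc ε < r j - r b := by linarith
        _ ≤ |r b - r j| := habs
        _ ≤ L' * (Sr + Bw) := hR
    have hT' : T * (4*L') < ε^2 := (lt_div_iff₀ (by positivity)).1 hT
    have hBw' : Bw * (4*L') < ε := (lt_div_iff₀ (by positivity)).1 hBw
    have e0 : ε * (4 * (L' * Sr)) < ε * ε := by nlinarith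
    have e1 : 4 * (L' * Sr) < ε := (mul_lt_mul_iff_right₀ hε).1 e0
    nlinarith
  rw [Real.dist_eq, sub_zero, abs_of_nonneg (hr j)]
  linarith
end

section
/- Under the stochastic KM decrease inequality with weights Λ_k = Π_{i<k}(1+8λ_i²)^{-1}, summing yields: Σ_{k=0}^{K-1} Λ_{k+1} λ_k(1−λ_k) E[‖T x_k − x_k‖²] ≤ ‖x_0 − p‖² + 2σ*² Σ_{k=0}^{K-1} λ_k², and hence the weighted-average residual bound E[‖T x_{N_K} − x_{N_K}‖²] ≤ (dist(x_0, Fix T)² + 2σ*² Σ_{k<K} λ_k²) / (Λ_K Σ_{k<K} λ_k(1−λ_k)), where N_K is a random index with P(N_K = k) ∝ Λ_{k+1} λ_k (1−λ_k). -/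
open MeasureTheory Finset

/-!
Multiplying the one-step inequality
`a_{k+1} ≤ (1 + c_k) a_k - b_k + e_k` by `Λ_{k+1} = ∏_{i ≤ k} (1 + c_i)⁻¹` turns its first term into
`Λ_k a_k`, so the inequalities telescope to `∑_{k<K} Λ_{k+1} b_k ≤ a_0 + ∑_{k<K} e_k`.
Applied to `a_k = E‖x_k - p‖²`, this bound holds for every fixed point `p`, hence with
`dist(x_0, Fix T)²` in place of `‖x_0 - p‖²`; dividing by the normalising weight, which is at
least `Λ_K ∑_{k<K} λ_k (1 - λ_k)` since `Λ` is antitone, gives the residual bound.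
-/

noncomputable def discountWeight (c : ℕ → ℝ) (k : ℕ) : ℝ :=
  ∏ i ∈ range k, (1 + c i)⁻¹

section discountWeight

variable {c : ℕ → ℝ}

@[simp]
lemma discountWeight_zero : discountWeight c 0 = 1 := by
  simp [discountWeight]

lemma discountWeight_pos (hc : ∀ k, 0 ≤ c k) (k : ℕ) : 0 < discountWeight c k :=
  prod_pos fun i _ => inv_pos.mpr (by linarith [hc i])

lemma discountWeight_succ_mul (hc : ∀ k, 0 ≤ c k) (k : ℕ) :
    discountWeight c (k + 1) * (1 + c k) = discountWeight c k := by
  have : 1 + c k ≠ 0 := by linarith [hc k]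
  rw [discountWeight, prod_range_succ, mul_assoc, inv_mul_cancel₀ this, mul_one]
  rfl

lemma discountWeight_le_one (hc : ∀ k, 0 ≤ c k) (k : ℕ) : discountWeight c k ≤ 1 :=
  prod_le_one (fun i _ => (inv_pos.mpr (by linarith [hc i])).le)
    fun i _ => inv_le_one_of_one_le₀ (by linarith [hc i])

lemma discountWeight_antitone (hc : ∀ k, 0 ≤ c k) : Antitone (discountWeight c) :=
  antitone_nat_of_succ_le fun k => by
    calc discountWeight c (k + 1) ≤ discountWeight c (k + 1) * (1 + c k) :=
          le_mul_of_one_le_right (discountWeight_pos hc _).le (by linarith [hc k])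
      _ = discountWeight c k := discountWeight_succ_mul hc k

lemma discountWeight_mul_sum_le (hc : ∀ k, 0 ≤ c k) {w : ℕ → ℝ} (hw : ∀ k, 0 ≤ w k) (K : ℕ) :
    discountWeight c K * ∑ k ∈ range K, w k ≤ ∑ k ∈ range K, discountWeight c (k + 1) * w k := by
  rw [mul_sum]
  exact sum_le_sum fun k hk =>
    mul_le_mul_of_nonneg_right (discountWeight_antitone hc (mem_range.mp hk)) (hw k)

/-- The discrete Robbins–Siegmund telescoping bound. -/
lemma sum_discountWeight_mul_le {a b e : ℕ → ℝ} (hc : ∀ k, 0 ≤ c k) (ha : ∀ k, 0 ≤ a k)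
    (he : ∀ k, 0 ≤ e k) (hrec : ∀ k, a (k + 1) ≤ (1 + c k) * a k - b k + e k) (K : ℕ) :
    ∑ k ∈ range K, discountWeight c (k + 1) * b k ≤ a 0 + ∑ k ∈ range K, e k := by
  have hstep : ∀ k, discountWeight c (k + 1) * b k ≤
      (discountWeight c k * a k - discountWeight c (k + 1) * a (k + 1)) + e k := by
    intro k
    have hΛ := discountWeight_pos hc (k + 1)
    have hΛe : discountWeight c (k + 1) * e k ≤ e k :=
      mul_le_of_le_one_left (he k) (discountWeight_le_one hc _)
    have := mul_le_mul_of_nonneg_left (hrec k) hΛ.le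
    rw [← discountWeight_succ_mul hc k]
    nlinarith
  calc ∑ k ∈ range K, discountWeight c (k + 1) * b k
      ≤ ∑ k ∈ range K,
          ((discountWeight c k * a k - discountWeight c (k + 1) * a (k + 1)) + e k) :=
        sum_le_sum fun k _ => hstep k
    _ = a 0 - discountWeight c K * a K + ∑ k ∈ range K, e k := by
        rw [sum_add_distrib, sum_range_sub' (fun k => discountWeight c k * a k),
          discountWeight_zero, one_mul]
    _ ≤ a 0 + ∑ k ∈ range K, e k := by
        linarith [mul_nonneg (discountWeight_pos hc K).le (ha K)]

end discountWeight

lemma le_infDist_sq_add {α : Type*} [PseudoMetricSpace α] {s : Set α} (hs : s.Nonempty) {x : α}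
    {S C : ℝ} (h : ∀ y ∈ s, S ≤ dist x y ^ 2 + C) : S ≤ Metric.infDist x s ^ 2 + C := by
  suffices √(S - C) ≤ Metric.infDist x s by
    linarith [(Real.sqrt_le_left Metric.infDist_nonneg).mp this]
  exact (Metric.le_infDist hs).mpr fun y hy =>
    (Real.sqrt_le_left dist_nonneg).mpr (by linarith [h y hy])

theorem stmt9_weighted_residual_bound_general
    {H : Type*} [NormedAddCommGroup H]
    {Ω : Type*} [MeasurableSpace Ω] (μ : Measure Ω) [IsProbabilityMeasure μ]
    (T : H → H) (x : ℕ → Ω → H) (x0 : H) (lam : ℕ → ℝ) (σstar : ℝ)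
    (hFix : ({y : H | T y = y}).Nonempty)
    (hlam : ∀ k, lam k ∈ Set.Ioo (0:ℝ) 1)
    (hx0 : ∀ ω, x 0 ω = x0)
    (hdec : ∀ p ∈ {y : H | T y = y}, ∀ k : ℕ,
      (∫ ω, ‖x (k + 1) ω - p‖ ^ 2 ∂μ)
        ≤ (1 + 8 * lam k ^ 2) * (∫ ω, ‖x k ω - p‖ ^ 2 ∂μ)
          - lam k * (1 - lam k) * (∫ ω, ‖T (x k ω) - x k ω‖ ^ 2 ∂μ)
          + 2 * lam k ^ 2 * σstar ^ 2) :
    (∀ p ∈ {y : H | T y = y}, ∀ K : ℕ,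
      (∑ k ∈ Finset.range K,
          (∏ i ∈ Finset.range (k + 1), (1 + 8 * lam i ^ 2)⁻¹) *
            (lam k * (1 - lam k)) * (∫ ω, ‖T (x k ω) - x k ω‖ ^ 2 ∂μ))
        ≤ ‖x0 - p‖ ^ 2 + 2 * σstar ^ 2 * ∑ k ∈ Finset.range K, lam k ^ 2) ∧
    (∀ K : ℕ,
      (∑ k ∈ Finset.range K,
          (∏ i ∈ Finset.range (k + 1), (1 + 8 * lam i ^ 2)⁻¹) *
            (lam k * (1 - lam k)) * (∫ ω, ‖T (x k ω) - x k ω‖ ^ 2 ∂μ)) /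
        (∑ k ∈ Finset.range K,
          (∏ i ∈ Finset.range (k + 1), (1 + 8 * lam i ^ 2)⁻¹) *
            (lam k * (1 - lam k)))
        ≤ (Metric.infDist x0 {y : H | T y = y} ^ 2
            + 2 * σstar ^ 2 * ∑ k ∈ Finset.range K, lam k ^ 2) /
          ((∏ i ∈ Finset.range K, (1 + 8 * lam i ^ 2)⁻¹) *
            ∑ k ∈ Finset.range K, lam k * (1 - lam k))) := by
  have hc : ∀ k, 0 ≤ 8 * lam k ^ 2 := fun k => by positivity
  have hw : ∀ k, 0 < lam k * (1 - lam k) := fun k =>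
    mul_pos (hlam k).1 (sub_pos.mpr (hlam k).2)
  have hsum : ∀ p ∈ {y : H | T y = y}, ∀ K : ℕ,
      ∑ k ∈ range K, discountWeight (fun i => 8 * lam i ^ 2) (k + 1) *
          (lam k * (1 - lam k)) * (∫ ω, ‖T (x k ω) - x k ω‖ ^ 2 ∂μ)
        ≤ ‖x0 - p‖ ^ 2 + 2 * σstar ^ 2 * ∑ k ∈ range K, lam k ^ 2 := by
    intro p hp K
    have := sum_discountWeight_mul_le (a := fun k => ∫ ω, ‖x k ω - p‖ ^ 2 ∂μ)
      (b := fun k => lam k * (1 - lam k) * ∫ ω, ‖T (x k ω) - x k ω‖ ^ 2 ∂μ)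
      (e := fun k => 2 * lam k ^ 2 * σstar ^ 2) hc
      (fun k => integral_nonneg fun ω => by positivity) (fun k => by positivity) (hdec p hp) K
    simp only [hx0, integral_const, probReal_univ, one_smul] at this
    convert this using 1
    · exact sum_congr rfl fun k _ => mul_assoc _ _ _
    · rw [mul_sum]
      exact congrArg _ (sum_congr rfl fun k _ => by ring)
  refine ⟨hsum, fun K => ?_⟩
  rcases K.eq_zero_or_pos with rfl | hK
  · simp
  refine div_le_div₀ (by positivity) ?_ ?_ ?_
  · exact le_infDist_sq_add hFix fun p hp => by
      rw [dist_eq_norm]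
      exact hsum p hp K
  · exact mul_pos (discountWeight_pos hc K) (sum_pos (fun k _ => hw k) (nonempty_range_iff.mpr hK.ne'))
  · exact discountWeight_mul_sum_le hc (fun k => (hw k).le) K

/-- Summing the stochastic KM decrease inequality with weights
`Λ_k = Π_{i<k}(1+8λ_i²)⁻¹` yields the weighted residual bound, and hence
the bound on the expected residual at the random index `N_K`, whose expectation
is exactly the normalized weighted average below. -/
theorem stmt9_weighted_residual_bound
    {H : Type*} [NormedAddCommGroup H] [InnerProductSpace ℝ H] [CompleteSpace H]
    {Ω : Type*} [MeasurableSpace Ω] (μ : Measure Ω) [IsProbabilityMeasure μ]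
    (T : H → H) (x : ℕ → Ω → H) (x0 : H) (lam : ℕ → ℝ) (σstar : ℝ)
    (hFix : ({y : H | T y = y}).Nonempty)
    (hlam : ∀ k, lam k ∈ Set.Ioo (0:ℝ) 1)
    (hx0 : ∀ ω, x 0 ω = x0)
    (hintp : ∀ (k : ℕ) (p : H), Integrable (fun ω => ‖x k ω - p‖ ^ 2) μ)
    (hintr : ∀ k : ℕ, Integrable (fun ω => ‖T (x k ω) - x k ω‖ ^ 2) μ)
    (hdec : ∀ p ∈ {y : H | T y = y}, ∀ k : ℕ,
      (∫ ω, ‖x (k + 1) ω - p‖ ^ 2 ∂μ)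
        ≤ (1 + 8 * lam k ^ 2) * (∫ ω, ‖x k ω - p‖ ^ 2 ∂μ)
          - lam k * (1 - lam k) * (∫ ω, ‖T (x k ω) - x k ω‖ ^ 2 ∂μ)
          + 2 * lam k ^ 2 * σstar ^ 2) :
    (∀ p ∈ {y : H | T y = y}, ∀ K : ℕ,
      (∑ k ∈ Finset.range K,
          (∏ i ∈ Finset.range (k + 1), (1 + 8 * lam i ^ 2)⁻¹) *
            (lam k * (1 - lam k)) * (∫ ω, ‖T (x k ω) - x k ω‖ ^ 2 ∂μ))
        ≤ ‖x0 - p‖ ^ 2 + 2 * σstar ^ 2 * ∑ k ∈ Finset.range K, lam k ^ 2) ∧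
    (∀ K : ℕ,
      (∑ k ∈ Finset.range K,
          (∏ i ∈ Finset.range (k + 1), (1 + 8 * lam i ^ 2)⁻¹) *
            (lam k * (1 - lam k)) * (∫ ω, ‖T (x k ω) - x k ω‖ ^ 2 ∂μ)) /
        (∑ k ∈ Finset.range K,
          (∏ i ∈ Finset.range (k + 1), (1 + 8 * lam i ^ 2)⁻¹) *
            (lam k * (1 - lam k)))
        ≤ (Metric.infDist x0 {y : H | T y = y} ^ 2
            + 2 * σstar ^ 2 * ∑ k ∈ Finset.range K, lam k ^ 2) /
          ((∏ i ∈ Finset.range K, (1 + 8 * lam i ^ 2)⁻¹) *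
            ∑ k ∈ Finset.range K, lam k * (1 - lam k))) :=
  stmt9_weighted_residual_bound_general μ T x x0 lam σstar hFix hlam hx0 hdec
end

section
/- For the three-operator splitting operator with convex-graph middle operator: if A, B are maximally monotone on H with graph(B) convex, C_ξ is τ-cocoercive for almost every ξ with C = E[C_ξ], ρ > 0, T_ξ = I − J_{ρA} + J_{ρB}∘(2J_{ρA} − I − ρ C_ξ ∘ J_{ρA}), and T = E[T_ξ], then J_{ρA}(Fix(T)) = Zer(A + B + C). -/
open MeasureTheory
open scoped RealInnerProductSpace

/-!
With a convex-graph operator `B`, the resolvent `J_{ρB}` commutes with expectations: for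
`w = J_{ρB} y` the pairs `(w, ρ⁻¹ (y - w))` lie in the graph of `B`, hence so does their
mean, which says exactly that `E[w] = J_{ρB}(E[y])`. Therefore `T = E[T_ξ]` is the
deterministic Davis–Yin operator `I - J_{ρA} + J_{ρB}(2 J_{ρA} - I - ρ C J_{ρA})`, and for
`z = J_{ρA} x` the fixed-point equation `J_{ρB}(2z - x - ρ C z) = z` unfolds through the two
resolvent identities into `ρ⁻¹ (x - z) ∈ A z` and `-ρ⁻¹ (x - z) - C z ∈ B z`.
-/

section Resolvent

variable {H : Type*} [AddCommGroup H] [Module ℝ H]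

/-- `J` is the resolvent `(I + ρA)⁻¹` of the set-valued operator `A`. -/
def IsResolvent (A : H → Set H) (ρ : ℝ) (J : H → H) : Prop :=
  ∀ x y : H, J x = y ↔ ρ⁻¹ • (x - y) ∈ A y

def davisYin (JA JB C : H → H) (ρ : ℝ) (x : H) : H :=
  x - JA x + JB (2 • JA x - x - ρ • C (JA x))

namespace IsResolvent

variable {A : H → Set H} {ρ : ℝ} {J : H → H}

theorem mem (hJ : IsResolvent A ρ J) (x : H) : ρ⁻¹ • (x - J x) ∈ A (J x) :=
  (hJ x (J x)).mp rfl

theorem apply_add_smul_eq_iff (hJ : IsResolvent A ρ J) (hρ : ρ ≠ 0) {z a : H} :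
    J (z + ρ • a) = z ↔ a ∈ A z := by
  rw [hJ, add_sub_cancel_left, inv_smul_smul₀ hρ]

end IsResolvent

theorem image_fixedPoints_davisYin {A B : H → Set H} {JA JB C : H → H} {ρ : ℝ}
    (hρ : ρ ≠ 0) (hJA : IsResolvent A ρ JA) (hJB : IsResolvent B ρ JB) :
    JA '' {x | davisYin JA JB C ρ x = x} =
      {z | ∃ a ∈ A z, ∃ b ∈ B z, a + b + C z = 0} := by
  ext z
  constructor
  · rintro ⟨x, hx, rfl⟩
    set a := ρ⁻¹ • (x - JA x)
    have hy : 2 • JA x - x - ρ • C (JA x) = JA x + ρ • (-a - C (JA x)) := by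
      simp only [a, smul_sub, smul_neg, smul_inv_smul₀ hρ, two_smul]
      abel
    have hfix : JB (2 • JA x - x - ρ • C (JA x)) = JA x := by
      simpa [davisYin, sub_add_eq_add_sub, sub_eq_iff_eq_add, add_comm] using hx
    rw [hy, hJB.apply_add_smul_eq_iff hρ] at hfix
    exact ⟨a, hJA.mem x, -a - C (JA x), hfix, by abel⟩
  · rintro ⟨a, ha, b, hb, hab⟩
    have hJx : JA (z + ρ • a) = z := (hJA.apply_add_smul_eq_iff hρ).mpr ha
    have hy : 2 • z - (z + ρ • a) - ρ • C z = z + ρ • b := by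
      linear_combination (norm := module) (-ρ) • hab
    refine ⟨z + ρ • a, ?_, hJx⟩
    simp only [Set.mem_ofPred_eq, davisYin, hJx, hy, (hJB.apply_add_smul_eq_iff hρ).mpr hb]
    abel

end Resolvent

section Expectation

variable {H : Type*} [NormedAddCommGroup H] [NormedSpace ℝ H]
  {I : Type*} [MeasurableSpace I] {ν : Measure I}

theorem IsResolvent.apply_integral {B : H → Set H} {ρ : ℝ} {J : H → H}
    (hJ : IsResolvent B ρ J)
    (hB : ∀ (W U : I → H), Integrable W ν → Integrable U ν →
      (∀ᵐ i ∂ν, U i ∈ B (W i)) → (∫ i, U i ∂ν) ∈ B (∫ i, W i ∂ν))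
    {y : I → H} (hy : Integrable y ν) (hJy : Integrable (fun i => J (y i)) ν) :
    J (∫ i, y i ∂ν) = ∫ i, J (y i) ∂ν := by
  rw [hJ, ← integral_sub hy hJy, ← integral_smul]
  exact hB _ _ hJy ((hy.sub hJy).smul ρ⁻¹) (ae_of_all _ fun i => hJ.mem (y i))

theorem integral_davisYin_eq [CompleteSpace H] [IsProbabilityMeasure ν] {B : H → Set H}
    {JA JB : H → H} {Cξ : I → H → H} {ρ : ℝ} (hJB : IsResolvent B ρ JB)
    (hB : ∀ (W U : I → H), Integrable W ν → Integrable U ν →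
      (∀ᵐ i ∂ν, U i ∈ B (W i)) → (∫ i, U i ∂ν) ∈ B (∫ i, W i ∂ν))
    {x : H} (hCint : Integrable (fun i => Cξ i (JA x)) ν)
    (hTint : Integrable (fun i => davisYin JA JB (Cξ i) ρ x) ν) :
    ∫ i, davisYin JA JB (Cξ i) ρ x ∂ν =
      davisYin JA JB (fun z => ∫ i, Cξ i z ∂ν) ρ x := by
  have hJint : Integrable (fun i => JB (2 • JA x - x - ρ • Cξ i (JA x))) ν :=
    (integrable_add_iff_integrable_right' (integrable_const _)).mp hTint
  have hCρint : Integrable (fun i => ρ • Cξ i (JA x)) ν := hCint.smul ρ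
  have hyint : Integrable (fun i => 2 • JA x - x - ρ • Cξ i (JA x)) ν :=
    (integrable_const _).sub hCρint
  have hy : ∫ i, (2 • JA x - x - ρ • Cξ i (JA x)) ∂ν =
      2 • JA x - x - ρ • ∫ i, Cξ i (JA x) ∂ν := by
    rw [integral_sub (integrable_const _) hCρint, integral_smul, integral_const,
      probReal_univ, one_smul]
  simp only [davisYin]
  rw [integral_add (integrable_const _) hJint, integral_const, probReal_univ, one_smul,
    ← hy, hJB.apply_integral hB hyint hJint]

end Expectation

theorem stmt17_tos_fixed_points_are_zeros_general
    {H : Type*} [NormedAddCommGroup H] [InnerProductSpace ℝ H] [CompleteSpace H]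
    {I : Type*} [MeasurableSpace I] (ν : Measure I) [IsProbabilityMeasure ν]
    (A B : H → Set H) (JA JB : H → H) (Cξ : I → H → H) (C : H → H) (T : H → H)
    (ρ τ : ℝ) (hρ : ρ ∈ Set.Ioo (0:ℝ) (2 * τ))
    -- resolvent characterizations (encoding maximal monotonicity of A and B)
    (hJA : ∀ x y : H, JA x = y ↔ ρ⁻¹ • (x - y) ∈ A y)
    (hJB : ∀ x y : H, JB x = y ↔ ρ⁻¹ • (x - y) ∈ B y)
    -- graph(B) is convex, so expectations of integrable selections stay in it
    (hBgraphExp : ∀ (W U : I → H), Integrable W ν → Integrable U ν →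
      (∀ᵐ i ∂ν, U i ∈ B (W i)) → (∫ i, U i ∂ν) ∈ B (∫ i, W i ∂ν))
    -- the cocoercive operators and their expectation
    (hCint : ∀ x : H, Integrable (fun i => Cξ i x) ν)
    (hC : ∀ x : H, C x = ∫ i, Cξ i x ∂ν)
    -- the splitting operators and their expectation
    (hTint : ∀ x : H,
      Integrable (fun i => x - JA x + JB (2 • JA x - x - ρ • Cξ i (JA x))) ν)
    (hT : ∀ x : H,
      T x = ∫ i, (x - JA x + JB (2 • JA x - x - ρ • Cξ i (JA x))) ∂ν) :
    JA '' {x : H | T x = x}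
      = {z : H | ∃ a ∈ A z, ∃ b ∈ B z, a + b + C z = 0} := by
  have hTeq : T = davisYin JA JB C ρ := by
    funext x
    rw [hT x, funext hC]
    exact integral_davisYin_eq hJB hBgraphExp (hCint (JA x)) (hTint x)
  rw [hTeq]
  exact image_fixedPoints_davisYin hρ.1.ne' hJA hJB

/-- For the stochastic three-operator splitting operator
`T_ξ = I − J_{ρA} + J_{ρB}∘(2J_{ρA} − I − ρ C_ξ ∘ J_{ρA})` with `A, B`
maximally monotone (encoded via their resolvents), `graph(B)` convex (so that
expectations of integrable selections remain in the graph), and `C_ξ`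
`τ`-cocoercive with `C = E[C_ξ]`, one has `J_{ρA}(Fix T) = Zer(A + B + C)`
where `T = E[T_ξ]`. -/
theorem stmt17_tos_fixed_points_are_zeros
    {H : Type*} [NormedAddCommGroup H] [InnerProductSpace ℝ H] [CompleteSpace H]
    {I : Type*} [MeasurableSpace I] (ν : Measure I) [IsProbabilityMeasure ν]
    (A B : H → Set H) (JA JB : H → H) (Cξ : I → H → H) (C : H → H) (T : H → H)
    (ρ τ : ℝ) (hτ : 0 < τ) (hρ : ρ ∈ Set.Ioo (0:ℝ) (2 * τ))
    -- resolvent characterizations (encoding maximal monotonicity of A and B)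
    (hJA : ∀ x y : H, JA x = y ↔ ρ⁻¹ • (x - y) ∈ A y)
    (hJB : ∀ x y : H, JB x = y ↔ ρ⁻¹ • (x - y) ∈ B y)
    -- monotonicity of A and B
    (hAmono : ∀ x y u v : H, u ∈ A x → v ∈ A y → 0 ≤ ⟪u - v, x - y⟫)
    (hBmono : ∀ x y u v : H, u ∈ B x → v ∈ B y → 0 ≤ ⟪u - v, x - y⟫)
    -- graph(B) is convex, so expectations of integrable selections stay in it
    (hBgraph : Convex ℝ {p : H × H | p.2 ∈ B p.1})
    (hBgraphExp : ∀ (W U : I → H), Integrable W ν → Integrable U ν →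
      (∀ᵐ i ∂ν, U i ∈ B (W i)) → (∫ i, U i ∂ν) ∈ B (∫ i, W i ∂ν))
    -- the cocoercive operators and their expectation
    (hcoco : ∀ᵐ i ∂ν, ∀ x y : H,
      τ * ‖Cξ i x - Cξ i y‖ ^ 2 ≤ ⟪Cξ i x - Cξ i y, x - y⟫)
    (hCint : ∀ x : H, Integrable (fun i => Cξ i x) ν)
    (hC : ∀ x : H, C x = ∫ i, Cξ i x ∂ν)
    -- the splitting operators and their expectation
    (hTint : ∀ x : H,
      Integrable (fun i => x - JA x + JB (2 • JA x - x - ρ • Cξ i (JA x))) ν)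
    (hT : ∀ x : H,
      T x = ∫ i, (x - JA x + JB (2 • JA x - x - ρ • Cξ i (JA x))) ∂ν) :
    JA '' {x : H | T x = x}
      = {z : H | ∃ a ∈ A z, ∃ b ∈ B z, a + b + C z = 0} :=
  stmt17_tos_fixed_points_are_zeros_general ν A B JA JB Cξ C T ρ τ hρ hJA hJB hBgraphExp hCint hC
    hTint hT
end
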